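/- arXiv:2410.14097 — 6 statements merged into one kernel-verified Lean document; each statement's English description precedes it below -/
import Mathlib

section
/- Let R be a ring and F : ModuleCat R ⥤ Ab an additive functor that is half-exact. Let B be an R-module with injective resolution 0 → B → I⁰ → I¹ → I² → ⋯, and for j ≥ 1 let Σʲ B denote the j-th cosyzygy (Σ⁰B = B, ΣʲB = coker(Σʲ⁻¹B ↪ Iʲ⁻¹)), so there are canonical monomorphisms ΣʲB ↪ Iʲ and epimorphisms Iʲ⁻¹ ↠ ΣʲB. Then the long sequence of abelian groups 0 → ker(F(B) → F(I⁰)) → F(B) → H⁰(F(I^•)) → ker(F(ΣB) → F(I¹)) → coker(F(I⁰) → F(ΣB)) → H¹(F(I^•)) → ker(F(Σ²B) → F(I²)) → coker(F(I¹) → F(Σ²B)) → H²(F(I^•)) → ⋯, in which Hʲ(F(I^•)) denotes the cohomology of the cochain complex F(I⁰) → F(I¹) → ⋯ at F(Iʲ), the maps into and out of the ker- and coker-terms are the canonically induced ones (kernel inclusions, maps induced by F applied to the structural monos and epis of the resolution, and the maps induced by the universal properties of kernel, cokernel and (co)homology), is exact. -/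
/-!
Away from the cohomology groups the sequence is formal: for composable `a`, `b` in an abelian
category, `ker (a ≫ b) → ker b → coker a → coker (a ≫ b)` is exact, and `F(dⱼ)` factors as
`F(Iʲ) → F(Σʲ⁺¹B) → F(Iʲ⁺¹)`. Half-exactness of `F` on `0 → ΣʲB → Iʲ → Σʲ⁺¹B → 0` is needed
only at `Hʲ(F(I^•))`: it says that a cocycle of `F(Iʲ)` killed by `F(Iʲ ↠ Σʲ⁺¹B)` comes from
`F(ΣʲB)`.
-/

open CategoryTheory Limits

set_option linter.unusedSectionVars false

namespace RightFundamentalSeq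

universe u v w

/-- The data of an injective resolution `0 → B → I⁰ → I¹ → ⋯` of the module `B = S 0`
together with its cosyzygies `S j = Σʲ B`, encoded by composable pairs
`Σʲ B →(m j) Iʲ →(e j) Σʲ⁺¹ B` with `m j ≫ e j = 0` (exactness is a separate hypothesis:
each such pair is required to be a short exact sequence in the main theorem). -/
structure CosyzygyData (R : Type u) [Ring R] where
  /-- the cosyzygy modules, `S 0` being the given module `B` -/
  S : ℕ → ModuleCat.{v} R
  /-- the modules of the injective resolution -/
  I : ℕ → ModuleCat.{v} R
  /-- the canonical monomorphisms `Σʲ B ↪ Iʲ` -/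
  m : ∀ j, S j ⟶ I j
  /-- the canonical epimorphisms `Iʲ ↠ Σʲ⁺¹ B` -/
  e : ∀ j, I j ⟶ S (j + 1)
  wme : ∀ j, m j ≫ e j = 0

variable {R : Type u} [Ring R]
variable (F : ModuleCat.{v} R ⥤ AddCommGrpCat.{w}) [F.Additive] (D : CosyzygyData.{u, v} R)

namespace CosyzygyData

/-- The differential `Iʲ ⟶ Iʲ⁺¹` of the injective resolution. -/
def d (j : ℕ) : D.I j ⟶ D.I (j + 1) := D.e j ≫ D.m (j + 1)

lemma d_comp_d (j : ℕ) : D.d j ≫ D.d (j + 1) = 0 := by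
  show (D.e j ≫ D.m (j + 1)) ≫ D.e (j + 1) ≫ D.m (j + 2) = 0
  rw [Category.assoc, reassoc_of% (D.wme (j + 1)), zero_comp, comp_zero]

end CosyzygyData

/-- `K j = ker (F(Σʲ B) → F(Iʲ))`, the value of the sub-stabilization of `F` at `Σʲ B`. -/
noncomputable def K (j : ℕ) : AddCommGrpCat.{w} := kernel (F.map (D.m j))

/-- `Cok j = coker (F(Iʲ) → F(Σʲ⁺¹ B))`. -/
noncomputable def Cok (j : ℕ) : AddCommGrpCat.{w} := cokernel (F.map (D.e j))

/-- The `j`-cocycles `Z j = ker (F(Iʲ) → F(Iʲ⁺¹))` of the complex `F(I^•)`. -/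
noncomputable def Z (j : ℕ) : AddCommGrpCat.{w} := kernel (F.map (D.d j))

/-- The canonical map `F(Σʲ B) ⟶ Z j` induced by `F(m j)`. -/
noncomputable def s (j : ℕ) : F.obj (D.S j) ⟶ Z F D j :=
  kernel.lift _ (F.map (D.m j)) (by
    rw [← F.map_comp]
    show F.map (D.m j ≫ D.e j ≫ D.m (j + 1)) = 0
    rw [reassoc_of% (D.wme j), zero_comp, F.map_zero])

/-- The lift `ℓ j : F(Iʲ) ⟶ Z (j+1)` of the differential `F(dⱼ)`. -/
noncomputable def l (j : ℕ) : F.obj (D.I j) ⟶ Z F D (j + 1) :=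
  kernel.lift _ (F.map (D.d j)) (by
    rw [← F.map_comp, D.d_comp_d, F.map_zero])

/-- The cohomology `Hʲ(F(I^•))` of the cochain complex `F(I⁰) → F(I¹) → ⋯` at `F(Iʲ)`:
`H 0` is the kernel of `F(I⁰) → F(I¹)` and `H (j+1) = Z (j+1) / im F(Iʲ)`. -/
noncomputable def H : ℕ → AddCommGrpCat.{w}
  | 0 => Z F D 0
  | (j + 1) => cokernel (l F D j)

/-- The kernel inclusion `K 0 = ker(F(B) → F(I⁰)) ⟶ F(B)`. -/
noncomputable def ι0 : K F D 0 ⟶ F.obj (D.S 0) := kernel.ι (F.map (D.m 0))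

/-- The canonical map `F(B) ⟶ H⁰(F(I^•))` induced by `F(m 0)`. -/
noncomputable def r0 : F.obj (D.S 0) ⟶ H F D 0 := s F D 0

/-- The canonical map `Z j ⟶ K (j+1) = ker(F(Σʲ⁺¹B) → F(Iʲ⁺¹))` induced by `F(e j)`. -/
noncomputable def toK (j : ℕ) : Z F D j ⟶ K F D (j + 1) :=
  kernel.lift _ (kernel.ι (F.map (D.d j)) ≫ F.map (D.e j)) (by
    erw [Category.assoc, ← F.map_comp]
    exact kernel.condition _)

/-- The connecting map `Hʲ(F(I^•)) ⟶ ker(F(Σʲ⁺¹B) → F(Iʲ⁺¹))`, induced by the universal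
properties of kernels and cokernels. -/
noncomputable def conn : ∀ j, H F D j ⟶ K F D (j + 1)
  | 0 => toK F D 0
  | (j + 1) => cokernel.desc (l F D j) (toK F D (j + 1)) (by
      apply (cancel_mono (kernel.ι (F.map (D.m (j + 2))))).1
      erw [Category.assoc, zero_comp]
      show l F D j ≫ toK F D (j + 1) ≫ kernel.ι _ = 0
      erw [toK, kernel.lift_ι, l, ← Category.assoc, kernel.lift_ι, ← F.map_comp]
      show F.map ((D.e j ≫ D.m (j + 1)) ≫ D.e (j + 1)) = 0
      erw [Category.assoc, D.wme (j + 1), comp_zero, F.map_zero])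

/-- The canonical map `ker(F(Σʲ⁺¹B) → F(Iʲ⁺¹)) ⟶ coker(F(Iʲ) → F(Σʲ⁺¹B))`. -/
noncomputable def q (j : ℕ) : K F D (j + 1) ⟶ Cok F D j :=
  kernel.ι (F.map (D.m (j + 1))) ≫ cokernel.π (F.map (D.e j))

lemma comp_s (j : ℕ) : F.map (D.e j) ≫ s F D (j + 1) = l F D j := by
  apply (cancel_mono (kernel.ι (F.map (D.d (j + 1))))).1
  erw [Category.assoc, s, kernel.lift_ι, l, kernel.lift_ι, ← F.map_comp]
  rfl

/-- The canonical map `coker(F(Iʲ) → F(Σʲ⁺¹B)) ⟶ Hʲ⁺¹(F(I^•))`. -/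
noncomputable def toH (j : ℕ) : Cok F D j ⟶ H F D (j + 1) :=
  cokernel.desc (F.map (D.e j)) (s F D (j + 1) ≫ cokernel.π (l F D j)) (by
    erw [← Category.assoc, comp_s, cokernel.condition]; rfl)

lemma w₁ : ι0 F D ≫ r0 F D = 0 := by
  apply (cancel_mono (kernel.ι (F.map (D.d 0)))).1
  erw [Category.assoc, zero_comp]
  show ι0 F D ≫ s F D 0 ≫ kernel.ι _ = 0
  erw [s, kernel.lift_ι, ι0, kernel.condition]; rfl

lemma w₂ : r0 F D ≫ conn F D 0 = 0 := by
  apply (cancel_mono (kernel.ι (F.map (D.m 1)))).1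
  erw [Category.assoc, zero_comp]
  show s F D 0 ≫ toK F D 0 ≫ kernel.ι _ = 0
  erw [toK, kernel.lift_ι, ← Category.assoc, s, kernel.lift_ι, ← F.map_comp, D.wme, F.map_zero]

lemma toK_comp_q (j : ℕ) : toK F D j ≫ q F D j = 0 := by
  erw [q, ← Category.assoc, toK, kernel.lift_ι, Category.assoc, cokernel.condition, comp_zero]

lemma w₃ : ∀ j, conn F D j ≫ q F D j = 0
  | 0 => toK_comp_q F D 0
  | (j + 1) => by
      apply (cancel_epi (cokernel.π (l F D j))).1
      erw [comp_zero, ← Category.assoc]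
      show (cokernel.π _ ≫ cokernel.desc _ _ _) ≫ q F D (j + 1) = 0
      erw [cokernel.π_desc, toK_comp_q]

lemma w₄ (j : ℕ) : q F D j ≫ toH F D j = 0 := by
  erw [q, Category.assoc, toH, cokernel.π_desc, ← Category.assoc]
  have h : kernel.ι (F.map (D.m (j + 1))) ≫ s F D (j + 1) = 0 := by
    apply (cancel_mono (kernel.ι (F.map (D.d (j + 1))))).1
    erw [Category.assoc, s, kernel.lift_ι, kernel.condition, zero_comp]
  erw [h, zero_comp]

lemma w₅ (j : ℕ) : toH F D j ≫ conn F D (j + 1) = 0 := by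
  apply (cancel_epi (cokernel.π (F.map (D.e j)))).1
  erw [comp_zero, ← Category.assoc, toH, cokernel.π_desc, Category.assoc]
  show s F D (j + 1) ≫ cokernel.π _ ≫ cokernel.desc _ _ _ = 0
  erw [cokernel.π_desc]
  apply (cancel_mono (kernel.ι (F.map (D.m (j + 2))))).1
  erw [Category.assoc, zero_comp]
  show s F D (j + 1) ≫ toK F D (j + 1) ≫ kernel.ι _ = 0
  erw [toK, kernel.lift_ι, ← Category.assoc, s, kernel.lift_ι, ← F.map_comp, D.wme, F.map_zero]

section Abelian

variable {C : Type*} [Category C] [Abelian C] {S₁ S₂ : ShortComplex C}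

lemma _root_.CategoryTheory.ShortComplex.Exact.of_epi_τ₁_of_mono_τ₂ (h : S₂.Exact)
    (φ : S₁ ⟶ S₂) [Epi φ.τ₁] [Mono φ.τ₂] : S₁.Exact := by
  rw [ShortComplex.exact_iff_exact_up_to_refinements]
  intro A x₂ hx₂
  obtain ⟨A', π, _, y₁, hy₁⟩ := h.exact_up_to_refinements (x₂ ≫ φ.τ₂)
    (by rw [Category.assoc, φ.comm₂₃, reassoc_of% hx₂, zero_comp])
  obtain ⟨A'', π', _, x₁, hx₁⟩ := surjective_up_to_refinements_of_epi φ.τ₁ y₁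
  refine ⟨A'', π' ≫ π, epi_comp _ _, x₁, ?_⟩
  rw [← cancel_mono φ.τ₂]
  simp only [Category.assoc, hy₁, ← φ.comm₁₂, reassoc_of% hx₁]

lemma _root_.CategoryTheory.ShortComplex.Exact.of_epi_τ₂_of_mono_τ₃ (h : S₁.Exact)
    (φ : S₁ ⟶ S₂) [Epi φ.τ₂] [Mono φ.τ₃] : S₂.Exact :=
  have : Epi (ShortComplex.opMap φ).τ₁ := inferInstanceAs (Epi φ.τ₃.op)
  have : Mono (ShortComplex.opMap φ).τ₂ := inferInstanceAs (Mono φ.τ₂.op)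
  S₂.exact_op_iff.mp (h.op.of_epi_τ₁_of_mono_τ₂ (ShortComplex.opMap φ))

variable {X Y W : C}

lemma _root_.CategoryTheory.ShortComplex.exact_kernelι_kernelLift (f : X ⟶ Y) (g : Y ⟶ W)
    (h : f ≫ g = 0) :
    (ShortComplex.mk (kernel.ι f) (kernel.lift g f h) (by ext; simp)).Exact :=
  (ShortComplex.exact_kernel f).of_epi_τ₁_of_mono_τ₂ { τ₁ := 𝟙 _, τ₂ := 𝟙 _, τ₃ := kernel.ι g }

lemma _root_.CategoryTheory.ShortComplex.exact_kernelLift_kernelι_comp_cokernelπ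
    (a : X ⟶ Y) (b : Y ⟶ W) {c : X ⟶ W} (hc : a ≫ b = c) :
    (ShortComplex.mk (kernel.lift b (kernel.ι c ≫ a) (by rw [Category.assoc, hc, kernel.condition]))
      (kernel.ι b ≫ cokernel.π a) (by simp)).Exact := by
  rw [ShortComplex.exact_iff_exact_up_to_refinements]
  intro A k hk
  obtain ⟨A', π, _, x, hx⟩ := (ShortComplex.exact_cokernel a).exact_up_to_refinements
    (k ≫ kernel.ι b) (by simpa using hk)
  refine ⟨A', π, inferInstance, kernel.lift c x ?_, ?_⟩
  · rw [← hc, ← reassoc_of% hx]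
    simp
  · ext
    simpa using hx

lemma _root_.CategoryTheory.ShortComplex.exact_kernelι_comp_cokernelπ_cokernelDesc
    {V : C} (a : X ⟶ Y) (b : Y ⟶ W) {c : X ⟶ W} (hc : a ≫ b = c) (i : W ⟶ V) [Mono i]
    {k : Y ⟶ V} (hk : b ≫ i = k) :
    (ShortComplex.mk (kernel.ι k ≫ cokernel.π a)
      (cokernel.desc a (b ≫ cokernel.π c) (by rw [← Category.assoc, hc, cokernel.condition]))
      (by
        have : kernel.ι k ≫ b = 0 := (cancel_mono i).1 (by simp [hk])
        simp [reassoc_of% this])).Exact := by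
  rw [ShortComplex.exact_iff_exact_up_to_refinements]
  intro A y hy
  obtain ⟨A', π, _, y', hy'⟩ := surjective_up_to_refinements_of_epi (cokernel.π a) y
  obtain ⟨A'', π', _, x, hx⟩ := (ShortComplex.exact_cokernel c).exact_up_to_refinements
    (y' ≫ b) (by
      rw [Category.assoc, ← cokernel.π_desc a (b ≫ cokernel.π c), ← reassoc_of% hy']
      exact (π ≫= hy).trans comp_zero)
  refine ⟨A'', π' ≫ π, epi_comp _ _, kernel.lift k (π' ≫ y' - x ≫ a) ?_, ?_⟩
  · simp [← hk, reassoc_of% hx, ← hc]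
  · simp [hy']

end Abelian

-- `Z j` and `H (j + 1)` are a kernel and a cokernel only after unfolding, which instance search
-- does not do.
instance (j : ℕ) : Mono (X := Z F D j) (kernel.ι (F.map (D.d j))) :=
  inferInstanceAs (Mono (kernel.ι _))

instance (j : ℕ) : Epi (Y := H F D (j + 1)) (cokernel.π (l F D j)) :=
  inferInstanceAs (Epi (cokernel.π _))

lemma s_ι (j : ℕ) : s F D j ≫ kernel.ι (F.map (D.d j)) = F.map (D.m j) :=
  kernel.lift_ι _ _ _

lemma π_conn (j : ℕ) : cokernel.π (l F D j) ≫ conn F D (j + 1) = toK F D (j + 1) :=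
  cokernel.π_desc _ _ _

lemma π_toH (j : ℕ) :
    cokernel.π (F.map (D.e j)) ≫ toH F D j = s F D (j + 1) ≫ cokernel.π (l F D j) :=
  cokernel.π_desc _ _ _

lemma toK_ι (j : ℕ) :
    toK F D j ≫ kernel.ι (F.map (D.m (j + 1))) = kernel.ι (F.map (D.d j)) ≫ F.map (D.e j) :=
  kernel.lift_ι _ _ _

lemma s_comp_toK (j : ℕ) : s F D j ≫ toK F D j = 0 := by
  refine (cancel_mono (kernel.ι (F.map (D.m (j + 1))))).1 ?_
  erw [Category.assoc, toK_ι, reassoc_of% s_ι, ← F.map_comp, D.wme, F.map_zero, zero_comp]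

lemma exact_ι0_r0 : (ShortComplex.mk _ _ (w₁ F D)).Exact :=
  ShortComplex.exact_kernelι_kernelLift _ _ _

lemma exact_s_toK (j : ℕ)
    (hj : (ShortComplex.mk (F.map (D.m j)) (F.map (D.e j))
      (by rw [← F.map_comp, D.wme, F.map_zero])).Exact) :
    (ShortComplex.mk _ _ (s_comp_toK F D j)).Exact :=
  hj.of_epi_τ₁_of_mono_τ₂
    { τ₁ := 𝟙 _, τ₂ := kernel.ι (F.map (D.d j)), τ₃ := kernel.ι (F.map (D.m (j + 1)))
      comm₁₂ := (Category.id_comp _).trans (s_ι F D j).symm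
      comm₂₃ := (toK_ι F D j).symm }

lemma exact_toK_q (j : ℕ) : (ShortComplex.mk _ _ (toK_comp_q F D j)).Exact :=
  ShortComplex.exact_kernelLift_kernelι_comp_cokernelπ _ _ (F.map_comp _ _).symm

lemma exact_conn_q : ∀ j, (ShortComplex.mk _ _ (w₃ F D j)).Exact
  | 0 => exact_toK_q F D 0
  | j + 1 => (exact_toK_q F D (j + 1)).of_epi_τ₂_of_mono_τ₃
      { τ₁ := cokernel.π (l F D j), τ₂ := 𝟙 _, τ₃ := 𝟙 _
        comm₁₂ := (π_conn F D j).trans (Category.comp_id _).symm }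

lemma exact_q_toH (j : ℕ) : (ShortComplex.mk _ _ (w₄ F D j)).Exact :=
  ShortComplex.exact_kernelι_comp_cokernelπ_cokernelDesc _ _ (comp_s F D j) _ (s_ι F D (j + 1))

lemma exact_toH_conn (j : ℕ)
    (hj : (ShortComplex.mk (F.map (D.m (j + 1))) (F.map (D.e (j + 1)))
      (by rw [← F.map_comp, D.wme, F.map_zero])).Exact) :
    (ShortComplex.mk _ _ (w₅ F D j)).Exact :=
  (exact_s_toK F D (j + 1) hj).of_epi_τ₂_of_mono_τ₃
    { τ₁ := cokernel.π (F.map (D.e j)), τ₂ := cokernel.π (l F D j), τ₃ := 𝟙 _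
      comm₁₂ := π_toH F D j
      comm₂₃ := (π_conn F D j).trans (Category.comp_id _).symm }

/-- **The right fundamental sequence of a half-exact covariant functor is exact.**
Let `F` be an additive half-exact functor from `R`-modules to abelian groups, and let
`0 → B → I⁰ → I¹ → ⋯` be an injective resolution of `B = S 0` with cosyzygies `Σʲ B = S j`
(encoded by the short exact sequences `0 → S j → I j → S (j+1) → 0`).  Then the long sequence
`0 → ker(F(B) → F(I⁰)) → F(B) → H⁰(F(I^•)) → ker(F(ΣB) → F(I¹)) → coker(F(I⁰) → F(ΣB)) →`
`H¹(F(I^•)) → ker(F(Σ²B) → F(I²)) → coker(F(I¹) → F(Σ²B)) → H²(F(I^•)) → ⋯`,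
with all maps the canonically induced ones, is exact. -/
theorem right_fundamental_sequence_exact
    (hhalf : ∀ ⦃X Y Z : ModuleCat.{v} R⦄ (f : X ⟶ Y) (g : Y ⟶ Z) (w : f ≫ g = 0),
      (ShortComplex.mk f g w).ShortExact →
      (ShortComplex.mk (F.map f) (F.map g)
        (by rw [← F.map_comp, w, F.map_zero])).Exact)
    (hres : ∀ j, (ShortComplex.mk (D.m j) (D.e j) (D.wme j)).ShortExact) :
    Mono (ι0 F D) ∧
    (ShortComplex.mk _ _ (w₁ F D)).Exact ∧
    (ShortComplex.mk _ _ (w₂ F D)).Exact ∧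
    (∀ j, (ShortComplex.mk _ _ (w₃ F D j)).Exact) ∧
    (∀ j, (ShortComplex.mk _ _ (w₄ F D j)).Exact) ∧
    (∀ j, (ShortComplex.mk _ _ (w₅ F D j)).Exact) := by
  have hex (j : ℕ) := hhalf _ _ _ (hres j)
  exact ⟨inferInstanceAs (Mono (kernel.ι _)), exact_ι0_r0 F D, exact_s_toK F D 0 (hex 0),
    exact_conn_q F D, exact_q_toH F D, fun j => exact_toH_conn F D j (hex (j + 1))⟩

end RightFundamentalSeq
end

section
/- Let R be a commutative ring and A a finitely presented R-module with a presentation P₁ →d P₀ → A → 0 in which P₀, P₁ are finitely generated projective; write (−)* = Hom_R(−, R) and Tr A := coker(d* : P₀* → P₁*). Then for every R-module B and every monomorphism ι : B ↪ I with I an injective R-module, there is an isomorphism Ext¹_R(Tr A, B) ≅ ker(id_A ⊗ ι : A ⊗_R B → A ⊗_R I). -/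
open TensorProduct CategoryTheory

/-- The transpose `Tr A = coker(d* : P₀* → P₁*)` of a finitely presented module with
presentation `P₁ →d P₀ → A → 0` by finitely generated projectives. -/
def Transpose {R : Type} [CommRing R] {P₁ P₀ : Type}
    [AddCommGroup P₁] [Module R P₁] [AddCommGroup P₀] [Module R P₀]
    (d : P₁ →ₗ[R] P₀) : Type :=
  (P₁ →ₗ[R] R) ⧸ LinearMap.range (d.dualMap : (P₀ →ₗ[R] R) →ₗ[R] (P₁ →ₗ[R] R))

instance {R : Type} [CommRing R] {P₁ P₀ : Type}
    [AddCommGroup P₁] [Module R P₁] [AddCommGroup P₀] [Module R P₀]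
    (d : P₁ →ₗ[R] P₀) : AddCommGroup (Transpose d) :=
  inferInstanceAs (AddCommGroup ((P₁ →ₗ[R] R) ⧸ LinearMap.range d.dualMap))

instance {R : Type} [CommRing R] {P₁ P₀ : Type}
    [AddCommGroup P₁] [Module R P₁] [AddCommGroup P₀] [Module R P₀]
    (d : P₁ →ₗ[R] P₀) : Module R (Transpose d) :=
  inferInstanceAs (Module R ((P₁ →ₗ[R] R) ⧸ LinearMap.range d.dualMap))

/-- The abelian group `Ext^n_R(Tr A, B)`. -/
noncomputable def ExtTr {R : Type} [CommRing R] {P₁ P₀ : Type}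
    [AddCommGroup P₁] [Module R P₁] [AddCommGroup P₀] [Module R P₀]
    (d : P₁ →ₗ[R] P₀) (n : ℕ) (B : Type) [AddCommGroup B] [Module R B] : Type :=
  ((Ext R (ModuleCat R) n).obj (Opposite.op (ModuleCat.of R (Transpose d)))).obj
    (ModuleCat.of R B)

noncomputable instance {R : Type} [CommRing R] {P₁ P₀ : Type}
    [AddCommGroup P₁] [Module R P₁] [AddCommGroup P₀] [Module R P₀]
    (d : P₁ →ₗ[R] P₀) (n : ℕ) (B : Type) [AddCommGroup B] [Module R B] :
    AddCommGroup (ExtTr d n B) :=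
  inferInstanceAs (AddCommGroup
    (((Ext R (ModuleCat R) n).obj (Opposite.op (ModuleCat.of R (Transpose d)))).obj
      (ModuleCat.of R B)))

/-!
Continue the presentation `P₀* → P₁* → Tr A → 0` by free covers of kernels to a projective
resolution of `Tr A`. Then `Ext¹(Tr A, B)` is the module of maps `g : P₀* → B` vanishing on
`ker d*`, modulo those of the form `f ∘ d*`.

For `P` finitely generated projective, `P ⊗ X ≅ Hom(P*, X)` naturally in `P` and `X`. Under this
isomorphism, right exactness of `⊗` identifies `A ⊗ B` with `Hom(P₀*, B)` modulo the maps
`f ∘ d*`, and `g` lands in `ker(A ⊗ ι)` iff `ι ∘ g` factors through `d*`; as `I` is injective and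
`ι` is a monomorphism, this happens iff `g` vanishes on `ker d*`.
-/

universe u v

section TensorDual

variable {R : Type*} [CommRing R]

noncomputable def tensorEquivHomDual (P X : Type*) [AddCommGroup P] [Module R P]
    [Module.Finite R P] [Module.Projective R P] [AddCommGroup X] [Module R X] :
    P ⊗[R] X ≃ₗ[R] (Module.Dual R P →ₗ[R] X) :=
  LinearEquiv.rTensor X (Module.evalEquiv R P) ≪≫ₗ dualTensorHomEquiv R (Module.Dual R P) X

variable {P Q X Y : Type*} [AddCommGroup P] [Module R P] [Module.Finite R P]
  [Module.Projective R P] [AddCommGroup Q] [Module R Q] [Module.Finite R Q]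
  [Module.Projective R Q] [AddCommGroup X] [Module R X] [AddCommGroup Y] [Module R Y]

@[simp]
theorem tensorEquivHomDual_tmul (p : P) (x : X) (f : Module.Dual R P) :
    tensorEquivHomDual P X (p ⊗ₜ x) f = f p • x := by
  simp [tensorEquivHomDual, dualTensorHomEquiv]

theorem tensorEquivHomDual_rTensor (u : P →ₗ[R] Q) (t : P ⊗[R] X) :
    tensorEquivHomDual Q X (u.rTensor X t) = tensorEquivHomDual P X t ∘ₗ u.dualMap := by
  induction t using TensorProduct.induction_on with
  | zero => simp
  | tmul p x => ext f; simp
  | add a b ha hb => simp [ha, hb, LinearMap.add_comp]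

theorem tensorEquivHomDual_lTensor (v : X →ₗ[R] Y) (t : P ⊗[R] X) :
    tensorEquivHomDual P Y (v.lTensor P t) = v ∘ₗ tensorEquivHomDual P X t := by
  induction t using TensorProduct.induction_on with
  | zero => simp
  | tmul p x => ext f; simp
  | add a b ha hb => simp [ha, hb, LinearMap.comp_add]

end TensorDual

theorem Module.Injective.exists_comp_eq_of_ker_le {R : Type u} [Ring R]
    {M N : Type*} {I : Type u} [AddCommGroup M] [Module R M] [AddCommGroup N] [Module R N]
    [AddCommGroup I] [Module R I] [Module.Injective R I]
    (u : M →ₗ[R] N) (φ : M →ₗ[R] I) (h : LinearMap.ker u ≤ LinearMap.ker φ) :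
    ∃ ψ : N →ₗ[R] I, ψ ∘ₗ u = φ := by
  obtain ⟨ψ, hψ⟩ := Module.Injective.extension_property R I _ _ ((LinearMap.ker u).liftQ u le_rfl)
    (LinearMap.ker_eq_bot.mp (Submodule.ker_liftQ_eq_bot _ _ _ le_rfl))
    ((LinearMap.ker u).liftQ φ h)
  exact ⟨ψ, LinearMap.ext fun m => congr($hψ (Submodule.Quotient.mk m))⟩

section Presentation

variable {R : Type u} [CommRing R] {A P₁ P₀ X : Type*} [AddCommGroup A] [Module R A]
  [AddCommGroup P₁] [Module R P₁] [Module.Finite R P₁] [Module.Projective R P₁]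
  [AddCommGroup P₀] [Module R P₀] [Module.Finite R P₀] [Module.Projective R P₀]
  [AddCommGroup X] [Module R X]
  {d : P₁ →ₗ[R] P₀} {p : P₀ →ₗ[R] A}

theorem rTensor_tensorEquivHomDual_symm_eq_zero_iff (hdp : Function.Exact d p)
    (hp : Function.Surjective p) (g : Module.Dual R P₀ →ₗ[R] X) :
    p.rTensor X ((tensorEquivHomDual P₀ X).symm g) = 0 ↔
      ∃ f : Module.Dual R P₁ →ₗ[R] X, f ∘ₗ d.dualMap = g := by
  rw [rTensor_exact X hdp hp, Set.mem_range, (tensorEquivHomDual P₁ X).symm.surjective.exists]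
  simp only [LinearEquiv.eq_symm_apply, tensorEquivHomDual_rTensor, LinearEquiv.apply_symm_apply]

theorem lTensor_rTensor_eq_zero_iff_ker_dualMap_le (hdp : Function.Exact d p)
    (hp : Function.Surjective p)
    {B : Type*} {I : Type u} [AddCommGroup B] [Module R B] [AddCommGroup I] [Module R I]
    [Module.Injective R I] {ι : B →ₗ[R] I} (hι : Function.Injective ι) (t : P₀ ⊗[R] B) :
    ι.lTensor A (p.rTensor B t) = 0 ↔
      LinearMap.ker d.dualMap ≤ LinearMap.ker (tensorEquivHomDual P₀ B t) := by
  have hcomm : ι.lTensor A (p.rTensor B t) = p.rTensor I (ι.lTensor P₀ t) := by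
    rw [← LinearMap.comp_apply, LinearMap.lTensor_comp_rTensor, ← LinearMap.rTensor_comp_lTensor]
    rfl
  have hker : LinearMap.ker (ι ∘ₗ tensorEquivHomDual P₀ B t) =
      LinearMap.ker (tensorEquivHomDual P₀ B t) :=
    LinearMap.ker_comp_of_ker_eq_bot _ (LinearMap.ker_eq_bot.mpr hι)
  rw [hcomm, ← (tensorEquivHomDual P₀ I).symm_apply_apply (ι.lTensor P₀ t),
    rTensor_tensorEquivHomDual_symm_eq_zero_iff hdp hp, tensorEquivHomDual_lTensor, ← hker]
  refine ⟨?_, Module.Injective.exists_comp_eq_of_ker_le _ _⟩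
  rintro ⟨f, hf⟩
  rw [← hf, LinearMap.ker_comp]
  exact fun g hg => by simp [LinearMap.mem_ker.mp hg]

end Presentation

noncomputable def CategoryTheory.ShortComplex.moduleCatHomologyEquivOfSurjective
    {R : Type u} [Ring R] (S : ShortComplex (ModuleCat.{v} R)) {N : Type*} [AddCommGroup N]
    [Module R N] (K : Submodule R N) (Φ : S.X₂ →ₗ[R] N) (hΦ : Function.Surjective Φ)
    (hK : ∀ x, Φ x ∈ K ↔ S.g x = 0) (hker : ∀ x, Φ x = 0 ↔ x ∈ LinearMap.range S.f.hom) :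
    S.homology ≃ₗ[R] K :=
  let Ψ : LinearMap.ker S.g.hom →ₗ[R] K :=
    (Φ ∘ₗ (LinearMap.ker S.g.hom).subtype).codRestrict K fun x => (hK x).mpr x.2
  have hΨ : Function.Surjective Ψ := fun k => by
    obtain ⟨x, hx⟩ := hΦ k
    exact ⟨⟨x, (hK x).mp (hx ▸ k.2)⟩, Subtype.ext hx⟩
  have hker' : LinearMap.range S.moduleCatToCycles = LinearMap.ker Ψ := by
    ext x
    constructor
    · rintro ⟨y, rfl⟩
      exact Subtype.ext ((hker _).mpr ⟨y, rfl⟩)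
    · intro hx
      obtain ⟨y, hy⟩ := (hker x).mp congr(($hx : N))
      exact ⟨y, Subtype.ext hy⟩
  S.moduleCatHomologyIso.toLinearEquiv ≪≫ₗ Submodule.quotEquivOfEq _ _ hker' ≪≫ₗ
    Ψ.quotKerEquivOfSurjective hΨ

theorem Finsupp.range_linearCombination_subtype {R M : Type*} [Semiring R] [AddCommMonoid M]
    [Module R M] (K : Submodule R M) :
    LinearMap.range (Finsupp.linearCombination R ((↑) : K → M)) = K := by
  rw [Finsupp.range_linearCombination, Subtype.range_coe, Submodule.span_eq]

namespace ModuleCat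

section KernelCover

variable {R : Type u} [Ring R]

noncomputable def kernelCover {X Y : ModuleCat.{u} R} (f : X ⟶ Y) :
    ModuleCat.of R (LinearMap.ker f.hom →₀ R) ⟶ X :=
  ModuleCat.ofHom (Finsupp.linearCombination R (↑))

theorem range_kernelCover {X Y : ModuleCat R} (f : X ⟶ Y) :
    LinearMap.range (kernelCover f).hom = LinearMap.ker f.hom :=
  Finsupp.range_linearCombination_subtype _

theorem kernelCover_comp {X Y : ModuleCat R} (f : X ⟶ Y) : kernelCover f ≫ f = 0 :=
  ModuleCat.hom_ext (LinearMap.range_le_ker_iff.mp (range_kernelCover f).le)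

theorem exact_kernelCover {X Y : ModuleCat R} (f : X ⟶ Y) :
    (ShortComplex.mk _ _ (kernelCover_comp f)).Exact :=
  (ShortComplex.moduleCat_exact_iff_range_eq_ker _).mpr (range_kernelCover f)

noncomputable def kernelCoverStep {X₀ X₁ : ModuleCat R} (f : X₁ ⟶ X₀) :
    Σ' (X₂ : ModuleCat R) (d : X₂ ⟶ X₁), d ≫ f = 0 :=
  ⟨_, kernelCover f, kernelCover_comp f⟩

noncomputable def kernelCoverComplex {X₀ X₁ : ModuleCat R} (d : X₁ ⟶ X₀) :
    ChainComplex (ModuleCat R) ℕ :=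
  ChainComplex.mk' X₀ X₁ d kernelCoverStep

theorem kernelCoverComplex_exactAt_succ {X₀ X₁ : ModuleCat R} (d : X₁ ⟶ X₀) (n : ℕ) :
    (kernelCoverComplex d).ExactAt (n + 1) := by
  rw [HomologicalComplex.exactAt_iff' _ (n + 2) (n + 1) n (by simp) (by simp)]
  let e : (kernelCoverComplex d).sc' (n + 2) (n + 1) n ≅
      ShortComplex.mk _ _ (kernelCover_comp ((kernelCoverComplex d).d (n + 1) n)) :=
    ShortComplex.isoMk (ChainComplex.mk'XIso X₀ X₁ d kernelCoverStep n) (Iso.refl _) (Iso.refl _)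
      ((ChainComplex.mk'_d X₀ X₁ d kernelCoverStep n).symm.trans (Category.comp_id _).symm)
      ((Category.id_comp _).trans (Category.comp_id _).symm)
  exact (ShortComplex.exact_iff_of_iso e).mpr (exact_kernelCover _)

@[simp]
theorem kernelCoverComplex_d_one_zero {X₀ X₁ : ModuleCat R} (d : X₁ ⟶ X₀) :
    (kernelCoverComplex d).d 1 0 = d :=
  ChainComplex.mk'_d_1_0 _ _ _ _

theorem range_kernelCoverComplex_d_two_one {X₀ X₁ : ModuleCat R} (d : X₁ ⟶ X₀) :
    LinearMap.range ((kernelCoverComplex d).d 2 1).hom = LinearMap.ker d.hom := by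
  have h := kernelCoverComplex_exactAt_succ d 0
  rw [HomologicalComplex.exactAt_iff' _ 2 1 0 (by simp) (by simp)] at h
  have h2 := h.moduleCat_range_eq_ker
  dsimp only [HomologicalComplex.sc', HomologicalComplex.shortComplexFunctor'] at h2
  rwa [kernelCoverComplex_d_one_zero] at h2

instance {X₀ X₁ : ModuleCat R} [Projective X₀] [Projective X₁] (d : X₁ ⟶ X₀) (n : ℕ) :
    Projective ((kernelCoverComplex d).X n) := by
  match n with
  | 0 => assumption
  | 1 => assumption
  | n + 2 =>
    exact Projective.of_iso (ChainComplex.mk'XIso X₀ X₁ d kernelCoverStep n).symm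
      (inferInstanceAs (Projective (ModuleCat.of R (_ →₀ R))))

noncomputable def projectiveResolutionOfExact (S : ShortComplex (ModuleCat R)) (hS : S.Exact)
    [Epi S.g] [Projective S.X₁] [Projective S.X₂] : ProjectiveResolution S.X₃ where
  complex := kernelCoverComplex S.f
  π := (ChainComplex.toSingle₀Equiv _ _).symm ⟨S.g, by
    rw [kernelCoverComplex_d_one_zero]
    exact S.zero⟩
  quasiIso := ⟨fun n => by
    cases n with
    | zero =>
      rw [ChainComplex.quasiIsoAt₀_iff, ShortComplex.quasiIso_iff_of_zeros']
      · refine (ShortComplex.exact_and_epi_g_iff_of_iso ?_).2 ⟨hS, inferInstance⟩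
        exact ShortComplex.isoMk (Iso.refl _) (Iso.refl _) (Iso.refl _)
          (by simp [kernelCoverComplex]; rfl) (by simp; rfl)
      all_goals rfl
    | succ n =>
      rw [quasiIsoAt_iff_exactAt']
      · exact kernelCoverComplex_exactAt_succ S.f n
      · exact ChainComplex.exactAt_succ_single_obj _ _⟩

end KernelCover

variable {R : Type u} [CommRing R]

/-- In degree 1, the cocycles of `Hom(kernelCoverComplex S.f, B)` are the maps `S.X₁ ⟶ B`
killing `ker S.f` and the coboundaries those factoring through `S.f`; `Φ` identifies the quotient
with `K`. -/
noncomputable def extOneLinearEquivOfExact (S : ShortComplex (ModuleCat R)) (hS : S.Exact)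
    [Epi S.g] [Projective S.X₁] [Projective S.X₂] (B : ModuleCat R) {N : Type*}
    [AddCommGroup N] [Module R N] (K : Submodule R N) (Φ : (S.X₁ ⟶ B) →ₗ[R] N)
    (hΦ : Function.Surjective Φ)
    (hK : ∀ g, Φ g ∈ K ↔ LinearMap.ker S.f.hom ≤ LinearMap.ker g.hom)
    (hker : ∀ g, Φ g = 0 ↔ ∃ h : S.X₂ ⟶ B, S.f ≫ h = g) :
    ((Ext R (ModuleCat R) 1).obj (Opposite.op S.X₃)).obj B ≃ₗ[R] K :=
  let P := projectiveResolutionOfExact S hS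
  let C := P.complex.linearYonedaObj R B
  have hcycle (g : S.X₁ ⟶ B) :
      LinearMap.ker S.f.hom ≤ LinearMap.ker g.hom ↔ (kernelCoverComplex S.f).d 2 1 ≫ g = 0 := by
    have h := range_kernelCoverComplex_d_two_one S.f
    refine ⟨fun hg => ModuleCat.hom_ext (LinearMap.range_le_ker_iff.mp (h.le.trans hg)),
      fun hg => h.ge.trans (LinearMap.range_le_ker_iff.mpr congr(($hg).hom))⟩
  have hboundary (g : S.X₁ ⟶ B) :
      (∃ h : S.X₂ ⟶ B, S.f ≫ h = g) ↔ ∃ h : S.X₂ ⟶ B, (kernelCoverComplex S.f).d 1 0 ≫ h = g := by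
    rw [kernelCoverComplex_d_one_zero]
    exact Iff.rfl
  (P.isoExt 1 B ≪≫ C.homologyIsoSc' 0 1 2 (by simp) (by simp)).toLinearEquiv ≪≫ₗ
    (C.sc' 0 1 2).moduleCatHomologyEquivOfSurjective K Φ hΦ
      (fun g => (hK g).trans (hcycle g)) (fun g => (hker g).trans (hboundary g))

end ModuleCat

namespace Transpose

variable {R : Type} [CommRing R] {P₁ P₀ : Type} [AddCommGroup P₁] [Module R P₁]
  [AddCommGroup P₀] [Module R P₀] (d : P₁ →ₗ[R] P₀)

noncomputable def presentation : ShortComplex (ModuleCat R) :=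
  ShortComplex.mk (ModuleCat.ofHom d.dualMap)
    (ModuleCat.ofHom (X := Module.Dual R P₁) (Y := Transpose d) (LinearMap.range d.dualMap).mkQ)
    (ModuleCat.hom_ext (LinearMap.range_le_ker_iff.mp (Submodule.ker_mkQ _).ge))

theorem presentation_exact : (presentation d).Exact :=
  (ShortComplex.moduleCat_exact_iff_range_eq_ker _).mpr (Submodule.ker_mkQ _).symm

instance : Epi (presentation d).g :=
  (ModuleCat.epi_iff_surjective _).mpr (Submodule.mkQ_surjective _)

instance [Module.Finite R P₀] [Module.Projective R P₀] : Projective (presentation d).X₁ :=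
  inferInstanceAs (Projective (ModuleCat.of R (Module.Dual R P₀)))

instance [Module.Finite R P₁] [Module.Projective R P₁] : Projective (presentation d).X₂ :=
  inferInstanceAs (Projective (ModuleCat.of R (Module.Dual R P₁)))

end Transpose

/-- For a finitely presented module `A` over a commutative ring `R` with presentation
`P₁ →d P₀ →p A → 0` by finitely generated projectives, for every `R`-module `B` and every
monomorphism `ι : B ↪ I` into an injective module `I`, there is an isomorphism
`Ext¹(Tr A, B) ≅ ker(id_A ⊗ ι : A ⊗ B → A ⊗ I)`. -/
theorem ext_one_transpose_iso_substabilization {R : Type} [CommRing R]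
    (A : Type) [AddCommGroup A] [Module R A]
    (P₁ P₀ : Type) [AddCommGroup P₁] [Module R P₁] [AddCommGroup P₀] [Module R P₀]
    [Module.Finite R P₁] [Module.Projective R P₁]
    [Module.Finite R P₀] [Module.Projective R P₀]
    (d : P₁ →ₗ[R] P₀) (p : P₀ →ₗ[R] A)
    (hp : Function.Surjective p) (hdp : LinearMap.range d = LinearMap.ker p)
    (B I : Type) [AddCommGroup B] [Module R B] [AddCommGroup I] [Module R I]
    (hI : Module.Injective R I) (ι : B →ₗ[R] I) (hι : Function.Injective ι) :
    Nonempty (ExtTr d 1 B ≃+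
      LinearMap.ker (LinearMap.lTensor A ι : A ⊗[R] B →ₗ[R] A ⊗[R] I)) := by
  have hexact : Function.Exact d p := LinearMap.exact_iff.mpr hdp.symm
  let Φ : (ModuleCat.of R (Module.Dual R P₀) ⟶ ModuleCat.of R B) →ₗ[R] A ⊗[R] B :=
    p.rTensor B ∘ₗ (tensorEquivHomDual P₀ B).symm.toLinearMap ∘ₗ
      ModuleCat.homLinearEquiv.toLinearMap
  have hΦ : Function.Surjective Φ :=
    (LinearMap.rTensor_surjective B hp).comp ((tensorEquivHomDual P₀ B).symm.surjective.comp
      ModuleCat.homLinearEquiv.surjective)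
  have hK (g) : Φ g ∈ LinearMap.ker (ι.lTensor A) ↔
      LinearMap.ker d.dualMap ≤ LinearMap.ker g.hom := by
    have := hI
    exact (lTensor_rTensor_eq_zero_iff_ker_dualMap_le hexact hp hι _).trans (by
      rw [LinearMap.comp_apply, LinearEquiv.coe_coe, LinearEquiv.apply_symm_apply]; rfl)
  have hker (g) : Φ g = 0 ↔ ∃ h, ModuleCat.ofHom d.dualMap ≫ h = g := by
    refine (rTensor_tensorEquivHomDual_symm_eq_zero_iff hexact hp g.hom).trans ⟨?_, ?_⟩
    · rintro ⟨f, hf⟩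
      exact ⟨ModuleCat.ofHom f, ModuleCat.hom_ext hf⟩
    · rintro ⟨h, rfl⟩
      exact ⟨h.hom, rfl⟩
  exact ⟨(ModuleCat.extOneLinearEquivOfExact (Transpose.presentation d)
    (Transpose.presentation_exact d) (ModuleCat.of R B) _ Φ hΦ hK hker).toAddEquiv⟩
end

section
/- Let R be a commutative ring, A an R-module, and G : ModuleCat R ⥤ Ab an additive functor preserving arbitrary direct sums (coproducts). If φ and ψ are natural transformations from the functor A ⊗_R − to G whose components at the R-module R coincide, then φ = ψ. In other words, every natural transformation A ⊗_R − ⟶ G is uniquely determined by its component at R. -/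
open CategoryTheory Limits MonoidalCategory

/-! A pure tensor `a ⊗ m` is the image of `a ⊗ 1 ∈ A ⊗ R` under `A ⊗ (r ↦ r • m)`, so naturality
expresses the value of a natural transformation at `a ⊗ m` through its component at `R`; pure
tensors span `A ⊗ M` additively. -/

namespace TensorProduct

variable {R : Type} [CommRing R] {A : Type} [AddCommGroup A] [Module R A]
  {G : ModuleCat R ⥤ AddCommGrpCat}

theorem natTrans_app_tmul
    (φ : (tensorLeft (ModuleCat.of R A) ⋙ forget₂ (ModuleCat R) AddCommGrpCat) ⟶ G)
    {M : ModuleCat R} (a : A) (m : M) :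
    φ.app M (a ⊗ₜ[R] m) =
      G.map (ModuleCat.ofHom (LinearMap.toSpanSingleton R M m))
        (φ.app (ModuleCat.of R R) (a ⊗ₜ[R] (1 : R))) := by
  have hnat := NatTrans.naturality_apply φ
    (ModuleCat.ofHom (LinearMap.toSpanSingleton R M m)) (a ⊗ₜ[R] (1 : R))
  erw [ModuleCat.MonoidalCategory.whiskerLeft_apply] at hnat
  simpa using hnat

theorem natTrans_ext_of_app_ring
    {φ ψ : (tensorLeft (ModuleCat.of R A) ⋙ forget₂ (ModuleCat R) AddCommGrpCat) ⟶ G}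
    (h : φ.app (ModuleCat.of R R) = ψ.app (ModuleCat.of R R)) : φ = ψ := by
  ext M x
  induction x using TensorProduct.induction_on with
  | zero => rw [map_zero, map_zero]
  | tmul a m => rw [natTrans_app_tmul φ, natTrans_app_tmul ψ, h]
  | add x y hx hy => rw [map_add, map_add, hx, hy]

end TensorProduct

theorem tensor_nat_trans_determined_by_ring_component_general
    {R : Type} [CommRing R] (A : Type) [AddCommGroup A] [Module R A]
    (G : ModuleCat R ⥤ AddCommGrpCat)
    (φ ψ : (tensorLeft (ModuleCat.of R A) ⋙ forget₂ (ModuleCat R) AddCommGrpCat) ⟶ G)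
    (h : φ.app (ModuleCat.of R R) = ψ.app (ModuleCat.of R R)) :
    φ = ψ :=
  TensorProduct.natTrans_ext_of_app_ring h

/-- Let `R` be a commutative ring, `A` an `R`-module, and `G` an additive functor from
`R`-modules to abelian groups preserving arbitrary direct sums.  Any two natural
transformations from the tensor product functor `A ⊗ᵣ −` to `G` that agree at the module `R`
coincide, i.e. a natural transformation `A ⊗ᵣ − ⟶ G` is uniquely determined by its component
at `R`. -/
theorem tensor_nat_trans_determined_by_ring_component
    {R : Type} [CommRing R] (A : Type) [AddCommGroup A] [Module R A]
    (G : ModuleCat R ⥤ AddCommGrpCat) [G.Additive]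
    (hG : ∀ ι : Type, PreservesColimitsOfShape (Discrete ι) G)
    (φ ψ : (tensorLeft (ModuleCat.of R A) ⋙ forget₂ (ModuleCat R) AddCommGrpCat) ⟶ G)
    (h : φ.app (ModuleCat.of R R) = ψ.app (ModuleCat.of R R)) :
    φ = ψ :=
  tensor_nat_trans_determined_by_ring_component_general A G φ ψ h
end

section
/- Let R be a commutative ring, f : A → B a homomorphism of R-modules, and D := im f, with m : D ↪ B the inclusion. Let M be an R-module and π : P ↠ M an epimorphism with P projective. Then the cokernel of the homomorphism ker(f ⊗ id_P : A ⊗_R P → B ⊗_R P) → ker(f ⊗ id_M : A ⊗_R M → B ⊗_R M) induced by id_A ⊗ π is isomorphic to ker(m ⊗ id_M : D ⊗_R M → B ⊗_R M). -/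
/-!
Factor `f = m ∘ p` with `p : A ↠ D`. By right exactness, `p ⊗ M` maps `ker (f ⊗ M)` onto
`ker (m ⊗ M)`, with kernel the image of `ker f ⊗ M`. Since `P` is flat, `m ⊗ P` is injective, so
`ker (f ⊗ P) = ker (p ⊗ P)` is the image of `ker f ⊗ P`; as `π` is surjective, its image under
`A ⊗ π` is again the image of `ker f ⊗ M`. Hence the range of `κ` is exactly the kernel of
`ker (f ⊗ M) ↠ ker (m ⊗ M)`.
-/

open TensorProduct

namespace LinearMap

variable {R A B : Type*} [CommRing R] [AddCommGroup A] [Module R A] [AddCommGroup B] [Module R B]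
  (f : A →ₗ[R] B) (N : Type*) [AddCommGroup N] [Module R N]

lemma exact_subtype_ker_rangeRestrict : Function.Exact (ker f).subtype f.rangeRestrict :=
  exact_iff.mpr <| by rw [ker_rangeRestrict, Submodule.range_subtype]

lemma ker_rTensor_rangeRestrict :
    ker (rTensor N f.rangeRestrict) = range (rTensor N (ker f).subtype) :=
  exact_iff.mp <|
    _root_.rTensor_exact N f.exact_subtype_ker_rangeRestrict f.surjective_rangeRestrict

lemma rTensor_range_subtype_comp_rTensor_rangeRestrict :
    rTensor N (range f).subtype ∘ₗ rTensor N f.rangeRestrict = rTensor N f := by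
  rw [← rTensor_comp]
  rfl

lemma ker_rTensor_of_flat [Module.Flat R N] :
    ker (rTensor N f) = range (rTensor N (ker f).subtype) := by
  rw [← rTensor_range_subtype_comp_rTensor_rangeRestrict, ker_comp_of_ker_eq_bot,
    ker_rTensor_rangeRestrict]
  exact ker_eq_bot.mpr <|
    Module.Flat.rTensor_preserves_injective_linearMap _ (range f).injective_subtype

lemma map_lTensor_ker_rTensor_of_flat {M P : Type*} [AddCommGroup M] [Module R M]
    [AddCommGroup P] [Module R P] [Module.Flat R P] {π : P →ₗ[R] M}
    (hπ : Function.Surjective π) :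
    (ker (rTensor P f)).map (lTensor A π) = range (rTensor M (ker f).subtype) := by
  rw [ker_rTensor_of_flat, ← range_comp, lTensor_comp_rTensor, ← rTensor_comp_lTensor,
    range_comp_of_range_eq_top _ (range_eq_top.mpr (lTensor_surjective _ hπ))]

def kerRTensorRangeRestrict :
    ker (rTensor N f) →ₗ[R] ker (rTensor N (range f).subtype) :=
  (rTensor N f.rangeRestrict).restrict fun x hx => by
    rwa [mem_ker, ← comp_apply, rTensor_range_subtype_comp_rTensor_rangeRestrict, ← mem_ker]

lemma surjective_kerRTensorRangeRestrict : Function.Surjective (kerRTensorRangeRestrict f N) := by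
  rintro ⟨y, hy⟩
  obtain ⟨x, rfl⟩ := rTensor_surjective N f.surjective_rangeRestrict y
  have hx : x ∈ ker (rTensor N f) := by
    rwa [mem_ker, ← rTensor_range_subtype_comp_rTensor_rangeRestrict, comp_apply, ← mem_ker]
  exact ⟨⟨x, hx⟩, rfl⟩

lemma ker_kerRTensorRangeRestrict :
    ker (kerRTensorRangeRestrict f N) =
      (range (rTensor N (ker f).subtype)).comap (ker (rTensor N f)).subtype := by
  rw [kerRTensorRangeRestrict, ker_restrict, ker_rTensor_rangeRestrict]

end LinearMap

/-- Let `R` be a commutative ring, `f : A → B` a homomorphism of `R`-modules, `D := im f`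
with inclusion `m : D ↪ B`, and `π : P ↠ M` an epimorphism with `P` projective.  The
cokernel of the map `ker(f ⊗ id_P) → ker(f ⊗ id_M)` induced by `id_A ⊗ π` is isomorphic to
`ker(m ⊗ id_M : D ⊗ M → B ⊗ M)`.  (This computes the quot-stabilization of the
tensor-copresented functor `ker(A ⊗ − → B ⊗ −)`.) -/
theorem quot_stabilization_of_tensor_copresented
    {R : Type} [CommRing R]
    {A B : Type} [AddCommGroup A] [Module R A] [AddCommGroup B] [Module R B]
    (f : A →ₗ[R] B)
    {M P : Type} [AddCommGroup M] [Module R M] [AddCommGroup P] [Module R P]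
    [Module.Projective R P] (π : P →ₗ[R] M) (hπ : Function.Surjective π)
    (κ : LinearMap.ker (LinearMap.rTensor P f) →ₗ[R] LinearMap.ker (LinearMap.rTensor M f))
    (hκ : ∀ x : LinearMap.ker (LinearMap.rTensor P f),
      (κ x : A ⊗[R] M) = LinearMap.lTensor A π (x : A ⊗[R] P)) :
    Nonempty ((LinearMap.ker (LinearMap.rTensor M f) ⧸ LinearMap.range κ) ≃+
      LinearMap.ker (LinearMap.rTensor M (LinearMap.range f).subtype)) := by
  have hκ' : (LinearMap.ker (LinearMap.rTensor M f)).subtype ∘ₗ κ =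
      LinearMap.lTensor A π ∘ₗ (LinearMap.ker (LinearMap.rTensor P f)).subtype :=
    LinearMap.ext hκ
  have hrange : LinearMap.range κ = LinearMap.ker (f.kerRTensorRangeRestrict M) := by
    rw [LinearMap.ker_kerRTensorRangeRestrict, ← f.map_lTensor_ker_rTensor_of_flat hπ,
      ← Submodule.comap_map_eq_of_injective (Submodule.injective_subtype _) (LinearMap.range κ),
      ← LinearMap.range_comp, hκ', LinearMap.range_comp, Submodule.range_subtype]
  -- naming the carriers fixes their `AddCommGroup` instances; unification alone stalls here
  have e := LinearMap.quotKerEquivOfSurjective (M := LinearMap.ker (LinearMap.rTensor M f))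
    (M₂ := LinearMap.ker (LinearMap.rTensor M (LinearMap.range f).subtype))
    (f.kerRTensorRangeRestrict M) (f.surjective_kerRTensorRangeRestrict M)
  rw [hrange]
  exact ⟨e.toAddEquiv⟩
end

section
/- Let 𝓑 and 𝓒 be abelian categories, F : 𝓑 ⥤ 𝓒 a functor with right adjoint G : 𝓒 ⥤ 𝓑, and J an injective object of 𝓒. Let ι : B ↪ I be a monomorphism in 𝓑 with I injective. Then there is an isomorphism of abelian groups Hom_𝓒(ker(F(ι)), J) ≅ coker( Hom_𝓑(I, G(J)) → Hom_𝓑(B, G(J)) ), where the map on Hom-groups is precomposition with ι. -/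
/-!
Since `J` is injective, `Hom(-, J)` turns the exact sequence `ker F(ι) → F(B) → F(I)` into the
exact sequence `Hom(F(I), J) → Hom(F(B), J) → Hom(ker F(ι), J) → 0`, so `Hom(ker F(ι), J)` is the
cokernel of precomposition with `F(ι)`. The adjunction identifies that map with precomposition
with `ι : Hom(I, G(J)) → Hom(B, G(J))`.
-/

open CategoryTheory Limits

namespace CategoryTheory

variable {C : Type*} [Category C]

theorem Injective.leftComp_surjective [Preadditive C] {X Y : C} (i : X ⟶ Y) [Mono i] (J : C)
    [Injective J] : Function.Surjective (Preadditive.leftComp J i) :=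
  fun g => ⟨Injective.factorThru g i, Injective.comp_factorThru g i⟩

theorem Injective.ker_leftComp_kernelι [Abelian C] {X Y : C} (f : X ⟶ Y) (J : C) [Injective J] :
    (Preadditive.leftComp J (kernel.ι f)).ker = (Preadditive.leftComp J f).range := by
  have hS := ShortComplex.exact_of_f_is_kernel (ShortComplex.mk _ _ (kernel.condition f))
    (kernelIsKernel f)
  ext g
  constructor
  · intro hg
    exact ⟨hS.descToInjective g hg, hS.comp_descToInjective g hg⟩
  · rintro ⟨h, rfl⟩
    exact (kernel.condition_assoc f h).trans zero_comp

noncomputable def Injective.kernelHomAddEquiv [Abelian C] {X Y : C} (f : X ⟶ Y) (J : C)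
    [Injective J] : ((X ⟶ J) ⧸ (Preadditive.leftComp J f).range) ≃+ (kernel f ⟶ J) :=
  (QuotientAddGroup.quotientAddEquivOfEq (Injective.ker_leftComp_kernelι f J).symm).trans
    (QuotientAddGroup.quotientKerEquivOfSurjective _ (Injective.leftComp_surjective _ J))

theorem Adjunction.homAddEquiv_comp_leftComp_map {D : Type*} [Category D] [Preadditive C]
    [Preadditive D] {F : C ⥤ D} {G : D ⥤ C} (adj : F ⊣ G) [F.Additive] {X Y : C} (f : X ⟶ Y)
    (Z : D) :
    (adj.homAddEquiv X Z).toAddMonoidHom.comp (Preadditive.leftComp Z (F.map f)) =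
      (Preadditive.leftComp (G.obj Z) f).comp (adj.homAddEquiv Y Z).toAddMonoidHom := by
  ext g
  exact adj.homEquiv_naturality_left f g

theorem Adjunction.map_range_leftComp_map {D : Type*} [Category D] [Preadditive C]
    [Preadditive D] {F : C ⥤ D} {G : D ⥤ C} (adj : F ⊣ G) [F.Additive] {X Y : C} (f : X ⟶ Y)
    (Z : D) :
    (Preadditive.leftComp Z (F.map f)).range.map (adj.homAddEquiv X Z).toAddMonoidHom =
      (Preadditive.leftComp (G.obj Z) f).range := by
  rw [← AddMonoidHom.range_comp, adj.homAddEquiv_comp_leftComp_map, AddMonoidHom.range_comp,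
    AddMonoidHom.range_eq_top.mpr (adj.homAddEquiv Y Z).surjective, ← AddMonoidHom.range_eq_map]

end CategoryTheory

theorem hom_substabilization_iso_stable_hom_general
    {𝓑 : Type*} [Category 𝓑] [Abelian 𝓑] {𝓒 : Type*} [Category 𝓒] [Abelian 𝓒]
    (F : 𝓑 ⥤ 𝓒) (G : 𝓒 ⥤ 𝓑) (adj : F ⊣ G) (J : 𝓒) [Injective J]
    {B I : 𝓑} (ι : B ⟶ I) :
    Nonempty ((kernel (F.map ι) ⟶ J) ≃+
      ((B ⟶ G.obj J) ⧸ AddMonoidHom.range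
        (AddMonoidHom.mk' (fun g : I ⟶ G.obj J => ι ≫ g)
          (fun g₁ g₂ => Preadditive.comp_add _ _ _ ι g₁ g₂)))) := by
  have : G.IsRightAdjoint := ⟨F, ⟨adj⟩⟩
  have : G.Additive := Functor.additive_of_preserves_binary_products G
  have : F.Additive := adj.left_adjoint_additive
  exact ⟨(Injective.kernelHomAddEquiv (F.map ι) J).symm.trans
    (QuotientAddGroup.congr _ _ (adj.homAddEquiv B J) (adj.map_range_leftComp_map ι J))⟩

/-- Let `𝓑`, `𝓒` be abelian categories, `F : 𝓑 ⥤ 𝓒` a functor with right adjoint `G`,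
`J` an injective object of `𝓒`, and `ι : B ↪ I` a monomorphism in `𝓑` with `I` injective.
Then `Hom_𝓒(ker F(ι), J)` is isomorphic to the cokernel of precomposition with `ι`,
`Hom_𝓑(I, G(J)) → Hom_𝓑(B, G(J))`, i.e. to the stable Hom group modulo injectives. -/
theorem hom_substabilization_iso_stable_hom
    {𝓑 : Type*} [Category 𝓑] [Abelian 𝓑] {𝓒 : Type*} [Category 𝓒] [Abelian 𝓒]
    (F : 𝓑 ⥤ 𝓒) (G : 𝓒 ⥤ 𝓑) (adj : F ⊣ G) (J : 𝓒) [Injective J]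
    {B I : 𝓑} (ι : B ⟶ I) [Mono ι] [Injective I] :
    Nonempty ((kernel (F.map ι) ⟶ J) ≃+
      ((B ⟶ G.obj J) ⧸ AddMonoidHom.range
        (AddMonoidHom.mk' (fun g : I ⟶ G.obj J => ι ≫ g)
          (fun g₁ g₂ => Preadditive.comp_add _ _ _ ι g₁ g₂)))) :=
  hom_substabilization_iso_stable_hom_general F G adj J ι
end

section
/- Let 𝓒 and 𝓓 be abelian categories, F : 𝓒 ⥤ 𝓓 a functor with right adjoint G : 𝓓 ⥤ 𝓒, and Q a projective object of 𝓒. Let π : P ↠ A be an epimorphism in 𝓓 with P projective. Then there is an isomorphism of abelian groups Hom_𝓒(Q, coker(G(π))) ≅ coker( Hom_𝓓(F(Q), P) → Hom_𝓓(F(Q), A) ), where the map on Hom-groups is postcomposition with π. -/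
/-!
Since `Q` is projective, `Hom(Q, -)` carries the right exact sequence `G P → G A → coker G(π) → 0`
to a right exact sequence of abelian groups, so `Hom(Q, coker G(π))` is the cokernel of
postcomposition with `G(π)` on `Hom(Q, G P) → Hom(Q, G A)`. The adjunction identifies this map
with postcomposition with `π` on `Hom(F Q, P) → Hom(F Q, A)`.
-/

open CategoryTheory Limits

namespace CategoryTheory

open Preadditive

lemma Adjunction.rightAdjoint_additive_of_hasBinaryProducts {C D : Type*} [Category C] [Category D]
    [Preadditive C] [Preadditive D] [HasBinaryProducts D] {F : C ⥤ D} {G : D ⥤ C}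
    (adj : F ⊣ G) : G.Additive := by
  have : G.IsRightAdjoint := ⟨F, ⟨adj⟩⟩
  exact G.additive_of_preserves_binary_products

lemma Adjunction.map_range_rightComp {C D : Type*} [Category C] [Category D]
    [Preadditive C] [Preadditive D] {F : C ⥤ D} {G : D ⥤ C} (adj : F ⊣ G) [F.Additive]
    (X : C) {Y Y' : D} (g : Y ⟶ Y') :
    (rightComp X (G.map g)).range.map (adj.homAddEquiv X Y').symm.toAddMonoidHom =
      (rightComp (F.obj X) g).range := by
  ext h
  simp only [AddSubgroup.mem_map, AddMonoidHom.mem_range]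
  constructor
  · rintro ⟨_, ⟨k, rfl⟩, rfl⟩
    exact ⟨(adj.homEquiv X Y).symm k, by simp [rightComp, adj.homEquiv_naturality_right_symm]⟩
  · rintro ⟨k, rfl⟩
    exact ⟨_, ⟨adj.homEquiv X Y k, rfl⟩, by simp [rightComp, adj.homEquiv_naturality_right_symm]⟩

namespace Projective

lemma rightComp_surjective {C : Type*} [Category C] [Preadditive C] (Q : C) [Projective Q]
    {X Y : C} (p : X ⟶ Y) [Epi p] : Function.Surjective (rightComp Q p) :=
  fun f => ⟨factorThru f p, factorThru_comp f p⟩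

variable {C : Type*} [Category C] [Abelian C] (Q : C) [Projective Q]

lemma ker_rightComp_cokernel_π {X Y : C} (f : X ⟶ Y) :
    (rightComp Q (cokernel.π f)).ker = (rightComp Q f).range := by
  have hf := ShortComplex.exact_cokernel f
  ext g
  constructor
  · intro hg
    exact ⟨hf.liftFromProjective g hg, hf.liftFromProjective_comp g hg⟩
  · rintro ⟨h, rfl⟩
    simp [rightComp]

noncomputable def homCokernelAddEquiv {X Y : C} (f : X ⟶ Y) :
    (Q ⟶ cokernel f) ≃+ (Q ⟶ Y) ⧸ (rightComp Q f).range :=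
  (QuotientAddGroup.quotientKerEquivOfSurjective _
      (rightComp_surjective Q (cokernel.π f))).symm.trans
    (QuotientAddGroup.quotientAddEquivOfEq (ker_rightComp_cokernel_π Q f))

end Projective

end CategoryTheory

theorem hom_quotstabilization_iso_stable_hom_general
    {𝓒 : Type*} [Category 𝓒] [Abelian 𝓒] {𝓓 : Type*} [Category 𝓓] [Abelian 𝓓]
    (F : 𝓒 ⥤ 𝓓) (G : 𝓓 ⥤ 𝓒) (adj : F ⊣ G) (Q : 𝓒) [Projective Q]
    {P A : 𝓓} (π : P ⟶ A) :
    Nonempty ((Q ⟶ cokernel (G.map π)) ≃+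
      ((F.obj Q ⟶ A) ⧸ AddMonoidHom.range
        (AddMonoidHom.mk' (fun g : F.obj Q ⟶ P => g ≫ π)
          (fun g₁ g₂ => Preadditive.add_comp _ _ _ g₁ g₂ π)))) := by
  have := adj.rightAdjoint_additive_of_hasBinaryProducts
  have := adj.left_adjoint_additive
  exact ⟨(Projective.homCokernelAddEquiv Q (G.map π)).trans
    (QuotientAddGroup.congr _ _ (adj.homAddEquiv Q A).symm (adj.map_range_rightComp Q π))⟩

/-- Let `𝓒`, `𝓓` be abelian categories, `F : 𝓒 ⥤ 𝓓` a functor with right adjoint `G`,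
`Q` a projective object of `𝓒`, and `π : P ↠ A` an epimorphism in `𝓓` with `P` projective.
Then `Hom_𝓒(Q, coker G(π))` is isomorphic to the cokernel of postcomposition with `π`,
`Hom_𝓓(F(Q), P) → Hom_𝓓(F(Q), A)`, i.e. to the stable Hom group modulo projectives. -/
theorem hom_quotstabilization_iso_stable_hom
    {𝓒 : Type*} [Category 𝓒] [Abelian 𝓒] {𝓓 : Type*} [Category 𝓓] [Abelian 𝓓]
    (F : 𝓒 ⥤ 𝓓) (G : 𝓓 ⥤ 𝓒) (adj : F ⊣ G) (Q : 𝓒) [Projective Q]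
    {P A : 𝓓} (π : P ⟶ A) [Epi π] [Projective P] :
    Nonempty ((Q ⟶ cokernel (G.map π)) ≃+
      ((F.obj Q ⟶ A) ⧸ AddMonoidHom.range
        (AddMonoidHom.mk' (fun g : F.obj Q ⟶ P => g ≫ π)
          (fun g₁ g₂ => Preadditive.add_comp _ _ _ g₁ g₂ π)))) :=
  hom_quotstabilization_iso_stable_hom_general F G adj Q π
end
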